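/- arXiv:1812.11293 — 10 statements merged into one kernel-verified Lean document; each statement's English description precedes it below -/
import Mathlib

section
/- Let n ≥ 3 and c ∈ int(Δ^{n-1}). For x ∈ int(Δ^{n-1}), x is a fixed point of the DeGroot–Friedkin map f (i.e., f(x) = x) if and only if cᵢ · (1 − ‖x‖₂²) = xᵢ(1 − xᵢ) for every i, i.e., c = (x ⊙ (1−x)) / (1 − ‖x‖₂²), where ⊙ denotes entrywise multiplication and ‖x‖₂² = Σᵢ xᵢ². -/
open Finset

/-- The DeGroot–Friedkin map `f(x) = (c ⊘ (1−x)) / ∑ᵢ cᵢ/(1−xᵢ)`. -/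
noncomputable def DFmap {n : ℕ} (c x : Fin n → ℝ) : Fin n → ℝ :=
  fun i => (c i / (1 - x i)) / (∑ j, c j / (1 - x j))

/-- For `n ≥ 3`, `c ∈ int(Δ^{n-1})` and `x ∈ int(Δ^{n-1})`, `x` is a fixed
point of the DeGroot–Friedkin map iff `cᵢ (1 − ‖x‖₂²) = xᵢ(1 − xᵢ)` for all `i`. -/
theorem DFmap_fixedPoint_iff (n : ℕ) (hn : 3 ≤ n) (c : Fin n → ℝ)
    (hc : ∀ i, 0 < c i) (hcsum : ∑ i, c i = 1)
    (x : Fin n → ℝ) (hx : ∀ i, 0 < x i) (hxsum : ∑ i, x i = 1) :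
    DFmap c x = x ↔ ∀ i, c i * (1 - ∑ j, (x j) ^ 2) = x i * (1 - x i) := by
  haveI : NeZero n := ⟨by omega⟩
  haveI : Nontrivial (Fin n) := Fin.nontrivial_iff_two_le.mpr (by omega)
  have hx1 : ∀ i, x i < 1 := by
    intro i
    obtain ⟨j, hj⟩ := exists_ne i
    calc x i < ∑ k, x k :=
          Finset.single_lt_sum hj (mem_univ i) (mem_univ j) (hx j)
            (fun k _ _ => (hx k).le)
      _ = 1 := hxsum
  have hQ : ∑ j, (x j) ^ 2 < 1 := by
    calc ∑ j, (x j) ^ 2 < ∑ j, x j :=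
          Finset.sum_lt_sum_of_nonempty univ_nonempty
            (fun j _ => by nlinarith [hx j, hx1 j])
      _ = 1 := hxsum
  have hQ1 : (0:ℝ) < 1 - ∑ j, (x j) ^ 2 := by linarith
  have hS : 0 < ∑ j, c j / (1 - x j) :=
    Finset.sum_pos (fun j _ => div_pos (hc j) (by linarith [hx1 j])) univ_nonempty
  constructor
  · intro h i
    have key : ∀ k, c k = x k * (1 - x k) * ∑ j, c j / (1 - x j) := by
      intro k
      have hk := congrFun h k
      simp only [DFmap] at hk
      have h1k : (1:ℝ) - x k ≠ 0 := by have := hx1 k; intro hc0; linarith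
      field_simp at hk
      linear_combination hk
    have hsum : (1:ℝ) = (∑ j, c j / (1 - x j)) * (1 - ∑ j, (x j) ^ 2) := by
      have e1 : ∑ k, c k = ∑ k, x k * (1 - x k) * ∑ j, c j / (1 - x j) :=
        Finset.sum_congr rfl fun k _ => key k
      rw [hcsum] at e1
      have e2 : ∑ k, x k * (1 - x k) * (∑ j, c j / (1 - x j)) =
          (∑ j, c j / (1 - x j)) * ((∑ k, x k) - ∑ k, (x k) ^ 2) := by
        calc ∑ k, x k * (1 - x k) * (∑ j, c j / (1 - x j))
            = ∑ k, (∑ j, c j / (1 - x j)) * (x k - (x k) ^ 2) :=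
              Finset.sum_congr rfl fun k _ => by ring
          _ = (∑ j, c j / (1 - x j)) * ∑ k, (x k - (x k) ^ 2) :=
              (Finset.mul_sum _ _ _).symm
          _ = (∑ j, c j / (1 - x j)) * ((∑ k, x k) - ∑ k, (x k) ^ 2) := by
              rw [Finset.sum_sub_distrib]
      linear_combination e1 + e2 + (∑ j, c j / (1 - x j)) * hxsum
    linear_combination (1 - ∑ j, (x j) ^ 2) * key i - (x i * (1 - x i)) * hsum
  · intro h
    have hterm : ∀ k, c k / (1 - x k) = x k / (1 - ∑ j, (x j) ^ 2) := by
      intro k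
      have h1k : (1:ℝ) - x k ≠ 0 := by have := hx1 k; intro hc0; linarith
      rw [div_eq_div_iff h1k hQ1.ne']
      linear_combination h k
    have hSval : (∑ j, c j / (1 - x j)) = 1 / (1 - ∑ j, (x j) ^ 2) := by
      calc (∑ j, c j / (1 - x j)) = ∑ k, x k / (1 - ∑ j, (x j) ^ 2) :=
            Finset.sum_congr rfl fun k _ => hterm k
        _ = (∑ k, x k) / (1 - ∑ j, (x j) ^ 2) := by rw [Finset.sum_div]
        _ = 1 / (1 - ∑ j, (x j) ^ 2) := by rw [hxsum]
    funext i
    simp only [DFmap]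
    rw [hterm i, hSval]
    field_simp
end

section
/- Let n ≥ 3 and c ∈ int(Δ^{n-1}), and suppose x* ∈ int(Δ^{n-1}) is a fixed point of the DeGroot–Friedkin map f (i.e., f(x*) = x*). Then x* is the unique minimizer of x ↦ D_KL(x‖c) + H(1−x) over Δ^{n-1} \ {e₁,…,eₙ}: for every x ∈ Δ^{n-1} that is not a standard basis vector and with x ≠ x*, D_KL(x*‖c) + H(1−x*) < D_KL(x‖c) + H(1−x). -/
/-!
Write `φ(t) = t log t - (1 - t) log (1 - t)`. At a fixed point `s` of the DeGroot–Friedkin map,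
`cᵢ = S sᵢ (1 - sᵢ)`, so on the simplex `D_KL(x‖c) + H(1 - x) = ∑ φ(xᵢ) - ⟨x, φ'(s)⟩ + const`,
and the claim is that the Bregman divergence of `x ↦ ∑ φ(xᵢ)` at `s` is positive. Although `φ`
is not convex, its Hessian `diag(1/xᵢ - 1/(1 - xᵢ))` is positive definite on the tangent space
`∑ dᵢ = 0` at every interior point when `n ≥ 3`: only the largest coordinate can carry a
nonpositive weight, and Cauchy–Schwarz over the remaining ones (all below `1/2`) compensates it.
Hence `∑ φ` is strictly convex along every segment from `s` into the simplex minus its vertices.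
-/

open Finset

/-- Extropy `H(1-x)`. -/
noncomputable def extropy {n : ℕ} (x : Fin n → ℝ) : ℝ :=
  -∑ i, (1 - x i) * Real.log (1 - x i)

/-- Kullback–Leibler divergence `D_KL(p‖q) = ∑ pᵢ log(pᵢ/qᵢ)` (with `0 log 0 = 0`). -/
noncomputable def klDiv {n : ℕ} (p q : Fin n → ℝ) : ℝ :=
  ∑ i, p i * Real.log (p i / q i)

open Real

theorem strictConvexOn_of_hasDerivAt2_pos {D : Set ℝ} (hD : Convex ℝ D) {f f' f'' : ℝ → ℝ}
    (hf : ContinuousOn f D) (hf' : ∀ x ∈ interior D, HasDerivAt f (f' x) x)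
    (hf'' : ∀ x ∈ interior D, HasDerivAt f' (f'' x) x) (hpos : ∀ x ∈ interior D, 0 < f'' x) :
    StrictConvexOn ℝ D f := by
  refine strictConvexOn_of_deriv2_pos hD hf fun x hx => ?_
  have hderiv : deriv f =ᶠ[nhds x] f' :=
    Filter.eventually_of_mem (isOpen_interior.mem_nhds hx) fun y hy => (hf' y hy).deriv
  rw [Function.iterate_succ_apply', Function.iterate_one, hderiv.deriv_eq, (hf'' x hx).deriv]
  exact hpos x hx

theorem hasDerivAt_sum_comp_line {ι : Type*} [Fintype ι] {ψ ψ' : ι → ℝ → ℝ} {s d : ι → ℝ}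
    {t : ℝ} (h : ∀ i, HasDerivAt (ψ i) (ψ' i (s i + t * d i)) (s i + t * d i)) :
    HasDerivAt (fun t => ∑ i, ψ i (s i + t * d i)) (∑ i, d i * ψ' i (s i + t * d i)) t :=
  HasDerivAt.fun_sum fun i _ =>
    ((h i).comp t ((hasDerivAt_mul_const (d i)).const_add (s i))).congr_deriv (mul_comm _ _)

theorem lt_one_of_pos_of_sum_eq_one {ι : Type*} [Fintype ι] [Nontrivial ι] {v : ι → ℝ}
    (hv : ∀ i, 0 < v i) (hvsum : ∑ i, v i = 1) (i : ι) : v i < 1 := by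
  obtain ⟨j, hji⟩ := exists_ne i
  exact hvsum ▸ single_lt_sum hji (mem_univ i) (mem_univ j) (hv j) fun l _ _ => (hv l).le

theorem lt_one_of_ne_vertex {ι : Type*} [Fintype ι] [DecidableEq ι] {x : ι → ℝ}
    (hx : ∀ i, 0 ≤ x i) (hxsum : ∑ i, x i = 1) {i : ι}
    (hi : x ≠ fun j => if j = i then (1 : ℝ) else 0) : x i < 1 := by
  by_contra! h
  have hsplit := add_sum_erase univ x (mem_univ i)
  have hrest := sum_nonneg fun j (_ : j ∈ univ.erase i) => hx j
  have hzero := (sum_eq_zero_iff_of_nonneg fun j _ => hx j).1 (le_antisymm (by linarith) hrest)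
  refine hi (funext fun j => ?_)
  split_ifs with hji
  · rw [hji]
    linarith
  · exact hzero j (mem_erase.2 ⟨hji, mem_univ j⟩)

theorem add_mul_sub_mem_Ioo {a b t : ℝ} (ha : 0 < a) (ha1 : a < 1) (hb : 0 ≤ b) (hb1 : b < 1)
    (ht : t ∈ Set.Ico (0 : ℝ) 1) : a + t * (b - a) ∈ Set.Ioo (0 : ℝ) 1 := by
  obtain ⟨ht0, ht1⟩ := ht
  rw [show a + t * (b - a) = (1 - t) * a + t * b by ring]
  constructor <;> nlinarith

theorem sum_mul_sq_pos_of_sum_eq_zero {ι : Type*} [Fintype ι] [DecidableEq ι] {w d : ι → ℝ}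
    (k : ι) (hw : ∀ i ≠ k, 0 < w i) (hwk : 0 < w k + (∑ i ∈ univ.erase k, (w i)⁻¹)⁻¹)
    (hd : ∑ i, d i = 0) (hd0 : d ≠ 0) : 0 < ∑ i, w i * d i ^ 2 := by
  rw [← add_sum_erase _ _ (mem_univ k)]
  rw [← add_sum_erase _ _ (mem_univ k)] at hd
  by_cases hk : d k = 0
  · obtain ⟨j, hj⟩ : ∃ j, d j ≠ 0 := Function.ne_iff.1 hd0
    have hjk : j ≠ k := by rintro rfl; exact hj hk
    rw [hk, zero_pow two_ne_zero, mul_zero, zero_add]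
    exact sum_pos' (fun i hi => mul_nonneg (hw i (ne_of_mem_erase hi)).le (sq_nonneg _))
      ⟨j, mem_erase.2 ⟨hjk, mem_univ _⟩, mul_pos (hw j hjk) (by positivity)⟩
  · have hCS := sq_sum_div_le_sum_sq_div (univ.erase k) d
      (fun i hi => inv_pos.2 (hw i (ne_of_mem_erase hi)))
    rw [show ∑ i ∈ univ.erase k, d i = -d k by linarith, neg_sq] at hCS
    simp only [div_inv_eq_mul] at hCS
    calc 0 < d k ^ 2 * (w k + (∑ i ∈ univ.erase k, (w i)⁻¹)⁻¹) := mul_pos (by positivity) hwk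
      _ = w k * d k ^ 2 + d k ^ 2 / ∑ i ∈ univ.erase k, (w i)⁻¹ := by ring
      _ ≤ w k * d k ^ 2 + ∑ i ∈ univ.erase k, w i * d i ^ 2 := by
        gcongr
        simpa only [mul_comm] using hCS

noncomputable def coordObjective (t : ℝ) : ℝ := t * log t - (1 - t) * log (1 - t)

noncomputable def coordObjectiveDeriv (t : ℝ) : ℝ := log t + log (1 - t) + 2

noncomputable def coordObjectiveDeriv2 (t : ℝ) : ℝ := t⁻¹ - (1 - t)⁻¹

theorem continuous_coordObjective : Continuous coordObjective :=
  continuous_mul_log.sub (continuous_mul_log.comp (continuous_const.sub continuous_id))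

theorem hasDerivAt_coordObjective {t : ℝ} (h0 : t ≠ 0) (h1 : t ≠ 1) :
    HasDerivAt coordObjective (coordObjectiveDeriv t) t := by
  have h := (hasDerivAt_mul_log h0).sub
    ((hasDerivAt_mul_log (sub_ne_zero.2 h1.symm)).comp t ((hasDerivAt_id t).const_sub 1))
  exact h.congr_deriv (by simp only [coordObjectiveDeriv]; ring)

theorem hasDerivAt_coordObjectiveDeriv {t : ℝ} (h0 : t ≠ 0) (h1 : t ≠ 1) :
    HasDerivAt coordObjectiveDeriv (coordObjectiveDeriv2 t) t := by
  have h := (((hasDerivAt_log h0).add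
    ((hasDerivAt_log (sub_ne_zero.2 h1.symm)).comp t ((hasDerivAt_id t).const_sub 1))).add_const 2)
  exact h.congr_deriv (by simp only [coordObjectiveDeriv2]; ring)

theorem coordObjectiveDeriv2_pos {a : ℝ} (ha : 0 < a) (ha' : a < 1 / 2) :
    0 < coordObjectiveDeriv2 a :=
  sub_pos.2 (inv_strictAnti₀ ha (by linarith))

theorem inv_coordObjectiveDeriv2_mul_lt {a A : ℝ} (ha : 0 < a) (haA : a < A) (ha' : a < 1 / 2) :
    (coordObjectiveDeriv2 a)⁻¹ * (1 - 2 * A) < a * (1 - A) := by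
  have h1 : 0 < 1 - a := by linarith
  have h2 : 0 < 1 - 2 * a := by linarith
  rw [show (coordObjectiveDeriv2 a)⁻¹ = a * (1 - a) / (1 - 2 * a) by
      simp only [coordObjectiveDeriv2]; field_simp; ring,
    div_mul_eq_mul_div, div_lt_iff₀ h2]
  nlinarith [mul_pos ha (sub_pos.2 haA)]

theorem sum_coordObjectiveDeriv2_mul_sq_pos {ι : Type*} [Fintype ι]
    (hcard : 3 ≤ Fintype.card ι) {v d : ι → ℝ} (hv : ∀ i, 0 < v i) (hvsum : ∑ i, v i = 1)
    (hd : ∑ i, d i = 0) (hd0 : d ≠ 0) :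
    0 < ∑ i, coordObjectiveDeriv2 (v i) * d i ^ 2 := by
  classical
  have : Nonempty ι := Fintype.card_pos_iff.1 (by omega)
  obtain ⟨k, hk⟩ := Finite.exists_max v
  set T := univ.erase k
  set A := 1 - v k
  have hTcard : 1 < #T := by rw [card_erase_of_mem (mem_univ k), card_univ]; omega
  have hT : T.Nonempty := card_pos.1 (by omega)
  have hA : ∑ i ∈ T, v i = A := by linarith [add_sum_erase univ v (mem_univ k)]
  have hvA : ∀ i ∈ T, v i < A := fun i hi => by
    obtain ⟨j, hj, hji⟩ := exists_mem_ne hTcard i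
    exact hA ▸ single_lt_sum hji hi hj (hv j) fun l _ _ => (hv l).le
  have hv_half : ∀ i ∈ T, v i < 1 / 2 := fun i hi => by linarith [hk i, hvA i hi]
  refine sum_mul_sq_pos_of_sum_eq_zero k
    (fun i hi => coordObjectiveDeriv2_pos (hv i) (hv_half i (mem_erase.2 ⟨hi, mem_univ i⟩)))
    ?_ hd hd0
  set F := ∑ i ∈ T, (coordObjectiveDeriv2 (v i))⁻¹
  have hF : 0 < F := sum_pos (fun i hi => inv_pos.2 (coordObjectiveDeriv2_pos (hv i)
    (hv_half i hi))) hT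
  -- the weight condition of `sum_mul_sq_pos_of_sum_eq_zero`, with denominators cleared
  have hFA : F * (1 - 2 * A) < A * (1 - A) := by
    rw [sum_mul, ← hA, sum_mul]
    exact sum_lt_sum_of_nonempty hT fun i hi =>
      inv_coordObjectiveDeriv2_mul_lt (hv i) (hA ▸ hvA i hi) (hv_half i hi)
  have hA0 : 0 < A := hA ▸ sum_pos (fun i _ => hv i) hT
  have hvk : v k = 1 - A := by ring
  clear_value A
  have hA1 : 0 < 1 - A := hvk ▸ hv k
  have hweight : coordObjectiveDeriv2 (v k) + F⁻¹
      = (A * (1 - A) - F * (1 - 2 * A)) / (A * (1 - A) * F) := by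
    rw [coordObjectiveDeriv2, hvk, sub_sub_cancel]
    field_simp
    ring
  rw [hweight]
  exact div_pos (by linarith) (by positivity)

theorem strictConvexOn_sum_coordObjective_segment {ι : Type*} [Fintype ι]
    (hcard : 3 ≤ Fintype.card ι) {s x : ι → ℝ} (hs : ∀ i, 0 < s i) (hs1 : ∀ i, s i < 1)
    (hssum : ∑ i, s i = 1) (hx : ∀ i, 0 ≤ x i) (hx1 : ∀ i, x i < 1) (hxsum : ∑ i, x i = 1)
    (hne : x ≠ s) :
    StrictConvexOn ℝ (Set.Icc 0 1) fun t => ∑ i, coordObjective (s i + t * (x i - s i)) := by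
  have hseg : ∀ t ∈ interior (Set.Icc (0 : ℝ) 1), ∀ i, s i + t * (x i - s i) ∈ Set.Ioo 0 1 :=
    fun t ht i => add_mul_sub_mem_Ioo (hs i) (hs1 i) (hx i) (hx1 i)
      (Set.Ioo_subset_Ico_self (by rwa [interior_Icc] at ht))
  refine strictConvexOn_of_hasDerivAt2_pos (convex_Icc 0 1)
    (continuous_finsetSum _ fun i _ => continuous_coordObjective.comp (by fun_prop)).continuousOn
    (fun t ht => hasDerivAt_sum_comp_line fun i =>
      hasDerivAt_coordObjective (hseg t ht i).1.ne' (hseg t ht i).2.ne)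
    (fun t ht => hasDerivAt_sum_comp_line (ψ := fun i u => (x i - s i) * coordObjectiveDeriv u)
      (ψ' := fun i u => (x i - s i) * coordObjectiveDeriv2 u) fun i =>
        (hasDerivAt_coordObjectiveDeriv (hseg t ht i).1.ne' (hseg t ht i).2.ne).const_mul _)
    fun t ht => ?_
  have hd : ∑ i, (x i - s i) = 0 := by rw [sum_sub_distrib, hxsum, hssum, sub_self]
  have hq := sum_coordObjectiveDeriv2_mul_sq_pos hcard (fun i => (hseg t ht i).1)
    (by rw [sum_add_distrib, ← mul_sum, hd, mul_zero, add_zero, hssum]) hd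
    fun h => hne (funext fun i => sub_eq_zero.1 (congrFun h i))
  convert hq using 2 with i
  ring

theorem sum_coordObjective_add_lt {ι : Type*} [Fintype ι] (hcard : 3 ≤ Fintype.card ι)
    {s x : ι → ℝ} (hs : ∀ i, 0 < s i) (hssum : ∑ i, s i = 1)
    (hx : ∀ i, 0 ≤ x i) (hx1 : ∀ i, x i < 1) (hxsum : ∑ i, x i = 1) (hne : x ≠ s) :
    ∑ i, coordObjective (s i) + ∑ i, (x i - s i) * coordObjectiveDeriv (s i) <
      ∑ i, coordObjective (x i) := by
  have : Nontrivial ι := Fintype.one_lt_card_iff_nontrivial.1 (by omega)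
  have hs1 := lt_one_of_pos_of_sum_eq_one hs hssum
  have hderiv : HasDerivAt (fun t => ∑ i, coordObjective (s i + t * (x i - s i)))
      (∑ i, (x i - s i) * coordObjectiveDeriv (s i)) 0 := by
    simpa using hasDerivAt_sum_comp_line (t := 0) (ψ := fun _ => coordObjective) fun i => by
      simpa using hasDerivAt_coordObjective (hs i).ne' (hs1 i).ne
  have hslope := (strictConvexOn_sum_coordObjective_segment hcard hs hs1 hssum hx hx1 hxsum
    hne).lt_slope_of_hasDerivAt (Set.left_mem_Icc.2 zero_le_one)
      (Set.right_mem_Icc.2 zero_le_one) zero_lt_one hderiv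
  simp only [slope_def_field, zero_mul, add_zero, one_mul, add_sub_cancel, sub_zero,
    div_one] at hslope
  linarith

theorem klDiv_add_extropy_eq {n : ℕ} (x c : Fin n → ℝ) (hc : ∀ i, c i ≠ 0) :
    klDiv x c + extropy x = ∑ i, (coordObjective (x i) - x i * log (c i)) := by
  have hkl : ∀ i, x i * log (x i / c i) = x i * log (x i) - x i * log (c i) := fun i => by
    rcases eq_or_ne (x i) 0 with h | h
    · simp [h]
    · rw [log_div h (hc i)]; ring
  simp only [klDiv, extropy, coordObjective, hkl]
  rw [← sub_eq_add_neg, ← sum_sub_distrib]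
  exact sum_congr rfl fun i _ => by ring

theorem exists_eq_mul_of_DFmap_eq_self {n : ℕ} {c s : Fin n → ℝ} (hs : ∀ i, 0 < s i)
    (hs1 : ∀ i, s i < 1) (hfix : DFmap c s = s) :
    ∃ S ≠ 0, ∀ i, c i = S * (s i * (1 - s i)) := by
  set S := ∑ j, c j / (1 - s j)
  have hfix' : ∀ i, c i / (1 - s i) / S = s i := congrFun hfix
  by_cases hS : S = 0
  · -- division by `S = 0` makes `DFmap c s = 0`, contradicting `s i > 0`
    exact ⟨1, one_ne_zero, fun i => absurd (hfix' i) (by simp [hS, (hs i).ne])⟩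
  · refine ⟨S, hS, fun i => ?_⟩
    have hci := hfix' i
    rw [div_div, div_eq_iff (mul_ne_zero (sub_pos.2 (hs1 i)).ne' hS)] at hci
    rw [hci]
    ring

theorem klDiv_add_extropy_sub_eq {n : ℕ} {c s x : Fin n → ℝ} {S : ℝ} (hS : S ≠ 0)
    (hs : ∀ i, 0 < s i) (hs1 : ∀ i, s i < 1) (hc : ∀ i, c i = S * (s i * (1 - s i)))
    (hsum : ∑ i, x i = ∑ i, s i) :
    klDiv x c + extropy x - (klDiv s c + extropy s) = ∑ i, coordObjective (x i) -
      (∑ i, coordObjective (s i) + ∑ i, (x i - s i) * coordObjectiveDeriv (s i)) := by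
  have hs0 : ∀ i, s i ≠ 0 := fun i => (hs i).ne'
  have hs1' : ∀ i, 1 - s i ≠ 0 := fun i => (sub_pos.2 (hs1 i)).ne'
  have hc0 : ∀ i, c i ≠ 0 := fun i => hc i ▸ mul_ne_zero hS (mul_ne_zero (hs0 i) (hs1' i))
  have hlog : ∀ i, log (c i) = coordObjectiveDeriv (s i) + (log S - 2) := fun i => by
    rw [hc i, log_mul hS (mul_ne_zero (hs0 i) (hs1' i)), log_mul (hs0 i) (hs1' i),
      coordObjectiveDeriv]
    ring
  have hconst : ∑ i, (x i - s i) * (log S - 2) = 0 := by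
    rw [← sum_mul, sum_sub_distrib, hsum, sub_self, zero_mul]
  rw [klDiv_add_extropy_eq x c hc0, klDiv_add_extropy_eq s c hc0, ← sum_sub_distrib]
  calc ∑ i, (coordObjective (x i) - x i * log (c i) - (coordObjective (s i) - s i * log (c i)))
      = ∑ i, (coordObjective (x i) - coordObjective (s i) - (x i - s i) * coordObjectiveDeriv (s i))
          - ∑ i, (x i - s i) * (log S - 2) := by
        rw [← sum_sub_distrib]
        exact sum_congr rfl fun i _ => by rw [hlog]; ring
    _ = _ := by rw [hconst, sub_zero, sum_sub_distrib, sum_sub_distrib]; ring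

theorem DFmap_fixedPoint_is_unique_minimizer_general (n : ℕ) (hn : 3 ≤ n)
    (c : Fin n → ℝ)
    (xs : Fin n → ℝ) (hxs : ∀ i, 0 < xs i) (hxssum : ∑ i, xs i = 1)
    (hfix : DFmap c xs = xs) :
    ∀ x : Fin n → ℝ, (∀ i, 0 ≤ x i) → (∑ i, x i = 1) →
      (∀ i : Fin n, x ≠ (fun j => if j = i then (1 : ℝ) else 0)) →
      x ≠ xs →
      klDiv xs c + extropy xs < klDiv x c + extropy x := by
  intro x hx0 hxsum hvert hxne
  have hcard : 3 ≤ Fintype.card (Fin n) := by simpa using hn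
  have : Nontrivial (Fin n) := Fin.nontrivial_iff_two_le.2 (by omega)
  have hxs1 := lt_one_of_pos_of_sum_eq_one hxs hxssum
  obtain ⟨S, hS, hc⟩ := exists_eq_mul_of_DFmap_eq_self hxs hxs1 hfix
  have hdiff := klDiv_add_extropy_sub_eq hS hxs hxs1 hc (hxsum.trans hxssum.symm)
  have hbregman := sum_coordObjective_add_lt hcard hxs hxssum hx0
    (fun i => lt_one_of_ne_vertex hx0 hxsum (hvert i)) hxsum hxne
  linarith

/-- For `n ≥ 3` and `c ∈ int(Δ^{n-1})`, an interior fixed point `x*` of the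
DeGroot–Friedkin map is the unique minimizer of `x ↦ D_KL(x‖c) + H(1−x)` over
the simplex minus its vertices. -/
theorem DFmap_fixedPoint_is_unique_minimizer (n : ℕ) (hn : 3 ≤ n)
    (c : Fin n → ℝ) (hc : ∀ i, 0 < c i) (hcsum : ∑ i, c i = 1)
    (xs : Fin n → ℝ) (hxs : ∀ i, 0 < xs i) (hxssum : ∑ i, xs i = 1)
    (hfix : DFmap c xs = xs) :
    ∀ x : Fin n → ℝ, (∀ i, 0 ≤ x i) → (∑ i, x i = 1) →
      (∀ i : Fin n, x ≠ (fun j => if j = i then (1 : ℝ) else 0)) →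
      x ≠ xs →
      klDiv xs c + extropy xs < klDiv x c + extropy x :=
  DFmap_fixedPoint_is_unique_minimizer_general n hn c xs hxs hxssum hfix
end

section
/- Let n ≥ 3 and c ∈ int(Δ^{n-1}). If x* ∈ int(Δ^{n-1}) satisfies D_KL(x*‖c) + H(1−x*) ≤ D_KL(x‖c) + H(1−x) for every x ∈ Δ^{n-1}, then cᵢ · (1 − ‖x*‖₂²) = xᵢ*(1 − xᵢ*) for every i, where ‖x*‖₂² = Σᵢ (xᵢ*)². -/
open Finset

/-! The objective `D_KL(x‖c) + H(1-x)` is a sum of one-variable functions of the coordinates,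
so at an interior minimizer on the simplex Lagrange's condition says that their derivatives
`log (xᵢ (1 - xᵢ) / cᵢ) + 2` all agree. Hence `xᵢ (1 - xᵢ) = cᵢ K` for a constant `K`, and
summing over `i` (using `∑ cᵢ = ∑ xᵢ = 1`) gives `K = 1 - ∑ xᵢ²`. -/

section Simplex

variable {ι : Type*} [Fintype ι]

lemma lt_one_of_pos_of_sum_eq_one_s7 [Nontrivial ι] {x : ι → ℝ} (hpos : ∀ k, 0 < x k)
    (hsum : ∑ k, x k = 1) (i : ι) : x i < 1 := by
  obtain ⟨j, hji⟩ := exists_ne i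
  have := single_lt_sum hji (mem_univ i) (mem_univ j) (hpos j) fun k _ _ => (hpos k).le
  linarith

/-- Moving mass from coordinate `j` to coordinate `i` of an interior point stays in the simplex
for small times, so the derivative along `eᵢ - eⱼ` vanishes. -/
theorem hasDerivAt_eq_of_isMinOn_stdSimplex {f : ι → ℝ → ℝ} {f' : ι → ℝ} {x : ι → ℝ}
    (hpos : ∀ k, 0 < x k) (hsum : ∑ k, x k = 1) (hf : ∀ k, HasDerivAt (f k) (f' k) (x k))
    (hmin : IsMinOn (fun y => ∑ k, f k (y k)) (stdSimplex ℝ ι) x) (i j : ι) : f' i = f' j := by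
  classical
  set d : ι → ℝ := Pi.single i 1 - Pi.single j 1
  set g : ℝ → ℝ := fun t => ∑ k, f k (x k + t * d k)
  have hg : HasDerivAt g (∑ k, f' k * d k) 0 := HasDerivAt.fun_sum fun k _ => by
    refine (hf k).comp_of_eq 0 ?_ (by simp)
    simpa using ((hasDerivAt_id (0 : ℝ)).mul_const (d k)).const_add (x k)
  have hloc : IsLocalMin g 0 := by
    have hnear : ∀ᶠ t in nhds (0 : ℝ), ∀ k, 0 < x k + t * d k :=
      Filter.eventually_all.2 fun k =>
        continuousAt_const.eventually_lt (by fun_prop) (by simpa using hpos k)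
    filter_upwards [hnear] with t ht
    have hmem : (fun k => x k + t * d k) ∈ stdSimplex ℝ ι :=
      ⟨fun k => (ht k).le, by simp [d, sum_add_distrib, ← mul_sum, hsum]⟩
    simpa [g] using isMinOn_iff.1 hmin _ hmem
  have hzero : ∑ k, f' k * d k = 0 := hg.deriv ▸ hloc.deriv_eq_zero
  simpa [d, mul_sub, sum_sub_distrib, Pi.single_apply, sub_eq_zero] using hzero

lemma sum_mul_one_sub_eq_one_sub_sum_sq {x : ι → ℝ} (hsum : ∑ k, x k = 1) :
    ∑ k, x k * (1 - x k) = 1 - ∑ k, x k ^ 2 := by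
  simp only [mul_one_sub, ← sq, sum_sub_distrib, hsum]

end Simplex

noncomputable def klExtropySummand (c v : ℝ) : ℝ :=
  v * Real.log (v / c) - (1 - v) * Real.log (1 - v)

lemma klDiv_add_extropy {n : ℕ} (p c : Fin n → ℝ) :
    klDiv p c + extropy p = ∑ k, klExtropySummand (c k) (p k) := by
  simp only [klDiv, extropy, klExtropySummand, sum_sub_distrib]
  ring

lemma hasDerivAt_klExtropySummand {c u : ℝ} (hc : 0 < c) (hu : 0 < u) (hu1 : u < 1) :
    HasDerivAt (klExtropySummand c) (Real.log (u * (1 - u) / c) + 2) u := by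
  have hu1' : 1 - u ≠ 0 := by linarith
  have hlin : HasDerivAt (fun v : ℝ => v * Real.log v - v * Real.log c)
      (Real.log u + 1 - Real.log c) u :=
    (Real.hasDerivAt_mul_log hu.ne').sub (by simpa using (hasDerivAt_id u).mul_const (Real.log c))
  have hkl : HasDerivAt (fun v : ℝ => v * Real.log (v / c)) (Real.log u + 1 - Real.log c) u := by
    refine hlin.congr_of_eventuallyEq ?_
    filter_upwards [eventually_gt_nhds hu] with v hv
    rw [Real.log_div hv.ne' hc.ne', mul_sub]
  have hext : HasDerivAt (fun v : ℝ => (1 - v) * Real.log (1 - v))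
      (-(Real.log (1 - u) + 1)) u := by
    simpa [Function.comp_def] using
      (Real.hasDerivAt_mul_log hu1').comp u ((hasDerivAt_const u 1).sub (hasDerivAt_id u))
  refine (hkl.sub hext).congr_deriv ?_
  rw [Real.log_div (by positivity) hc.ne', Real.log_mul hu.ne' hu1']
  ring

/-- For `n ≥ 3` and `c ∈ int(Δ^{n-1})`, any interior minimizer `x*` of
`x ↦ D_KL(x‖c) + H(1−x)` over the simplex satisfies the stationarity condition
`cᵢ (1 − ‖x*‖₂²) = xᵢ*(1 − xᵢ*)` for every `i`. -/
theorem minimizer_satisfies_KKT (n : ℕ) (hn : 3 ≤ n) (c : Fin n → ℝ)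
    (hc : ∀ i, 0 < c i) (hcsum : ∑ i, c i = 1)
    (xs : Fin n → ℝ) (hxs : ∀ i, 0 < xs i) (hxssum : ∑ i, xs i = 1)
    (hmin : ∀ x : Fin n → ℝ, (∀ i, 0 ≤ x i) → (∑ i, x i = 1) →
      klDiv xs c + extropy xs ≤ klDiv x c + extropy x) :
    ∀ i, c i * (1 - ∑ j, (xs j) ^ 2) = xs i * (1 - xs i) := by
  intro i
  have : Nontrivial (Fin n) := Fin.nontrivial_iff_two_le.2 (by omega)
  have hlt : ∀ k, xs k < 1 := lt_one_of_pos_of_sum_eq_one_s7 hxs hxssum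
  have hminOn : IsMinOn (fun y => ∑ k, klExtropySummand (c k) (y k)) (stdSimplex ℝ (Fin n)) xs :=
    isMinOn_iff.2 fun y hy => by simpa only [klDiv_add_extropy] using hmin y hy.1 hy.2
  have hpos (l : Fin n) : 0 < xs l * (1 - xs l) / c l :=
    div_pos (mul_pos (hxs l) (sub_pos.2 (hlt l))) (hc l)
  have hratio (k : Fin n) : xs k * (1 - xs k) = c k * (xs i * (1 - xs i) / c i) := by
    have hderiv := hasDerivAt_eq_of_isMinOn_stdSimplex hxs hxssum
      (fun l => hasDerivAt_klExtropySummand (hc l) (hxs l) (hlt l)) hminOn k i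
    have hratio_eq := Real.log_injOn_pos (hpos k) (hpos i) (by linarith)
    rw [← hratio_eq, mul_div_cancel₀ _ (hc k).ne']
  have hK : 1 - ∑ j, xs j ^ 2 = xs i * (1 - xs i) / c i := by
    rw [← sum_mul_one_sub_eq_one_sub_sum_sq hxssum, sum_congr rfl fun k _ => hratio k, ← sum_mul,
      hcsum, one_mul]
  rw [hK, mul_div_cancel₀ _ (hc i).ne']
end

section
/- Let n ≥ 3 and c ∈ int(Δ^{n-1}). Then the DeGroot–Friedkin map f has at most one fixed point in int(Δ^{n-1}): if x, y ∈ int(Δ^{n-1}) satisfy f(x) = x and f(y) = y, then x = y. -/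
/-!
A fixed point `x` satisfies `xᵢ (1 - xᵢ) = cᵢ / S` with `S = ∑ⱼ cⱼ / (1 - xⱼ)`, so two fixed
points `x, y` with `S_x ≤ S_y` satisfy `xᵢ (1 - xᵢ) = l · yᵢ (1 - yᵢ)` with `l = S_y / S_x ≥ 1`.
As `n ≥ 3`, any two coordinates sum to less than `1`, and on such pairs `t ↦ t (1 - t)` is
increasing.

If every `yᵢ ≤ 1/2`, this gives `y ≤ x` coordinatewise, so `x = y`. Otherwise exactly one `y_k`
exceeds `1/2`, and all other coordinates of both points lie below `1/2`; for `l = 1` they agree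
there, hence everywhere. For `l > 1`, the solution `X ≤ 1/2` of `X (1 - X) = l t (1 - t)`
determines `t` through `p = X / t` as `t = (p - l) / (p² - l)`, which increases in `p` on the
relevant range; so `X / t` increases with `t`. Comparing each `yᵢ`, `i ≠ k`, with
`u = 1 - y_k = ∑_{i ≠ k} yᵢ` yields `1 - x_k = ∑_{i ≠ k} xᵢ < min (x_k, 1 - x_k)`, a contradiction.
-/

open Finset

theorem mul_one_sub_lt_mul_one_sub_iff {a b : ℝ} (h : a + b < 1) :
    a * (1 - a) < b * (1 - b) ↔ a < b := by
  have hdiff : b * (1 - b) - a * (1 - a) = (b - a) * (1 - a - b) := by ring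
  constructor <;> intro hlt <;> nlinarith

theorem le_of_mul_one_sub_le {a b : ℝ} (hb : b ≤ 1 / 2) (h : b * (1 - b) ≤ a * (1 - a)) :
    b ≤ a := by
  by_contra! hab
  exact ((mul_one_sub_lt_mul_one_sub_iff (by linarith)).2 hab).not_ge h

theorem eq_of_mul_one_sub_eq {a b : ℝ} (ha : a ≤ 1 / 2) (hb : b ≤ 1 / 2)
    (h : a * (1 - a) = b * (1 - b)) : a = b :=
  le_antisymm (le_of_mul_one_sub_le ha h.le) (le_of_mul_one_sub_le hb h.ge)

/-- Where the ratios `T / t` with `T (1 - T) = l t (1 - t)`, `0 < t ≤ 1/2`, `T ≤ 1/2` lie. -/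
def lowerBranchRatios (l : ℝ) : Set ℝ := {p | l ≤ p ∧ (p - l) ^ 2 ≤ l ^ 2 - l}

theorem strictMonoOn_sub_div_sq_sub {l : ℝ} (hl : 1 < l) :
    StrictMonoOn (fun p : ℝ => (p - l) / (p ^ 2 - l)) (lowerBranchRatios l) := by
  rintro p ⟨hlp, hp⟩ q ⟨hlq, hq⟩ hpq
  have hp2 : 0 < p ^ 2 - l := by nlinarith
  have hq2 : 0 < q ^ 2 - l := by nlinarith
  have hpq' : (p - l) * (q - l) < l ^ 2 - l := by nlinarith
  rw [div_lt_div_iff₀ hp2 hq2]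
  nlinarith [mul_pos (sub_pos.2 hpq) (sub_pos.2 hpq')]

theorem div_mem_lowerBranchRatios {l t T : ℝ} (hl : 1 < l) (ht : 0 < t) (ht2 : t ≤ 1 / 2)
    (hT : T ≤ 1 / 2) (h : T * (1 - T) = l * (t * (1 - t))) :
    T / t ∈ lowerBranchRatios l ∧ (T / t - l) / ((T / t) ^ 2 - l) = t := by
  obtain ⟨p, rfl⟩ : ∃ p, T = p * t := ⟨T / t, (div_mul_cancel₀ T ht.ne').symm⟩
  rw [mul_div_cancel_right₀ p ht.ne']
  have htT : t ≤ p * t :=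
    le_of_mul_one_sub_le ht2 (by rw [h]; nlinarith [mul_pos ht (by linarith : (0 : ℝ) < 1 - t)])
  have hrel : t * (p ^ 2 - l) = p - l :=
    mul_left_cancel₀ ht.ne' (by linear_combination -h)
  have hlp : l ≤ p := by nlinarith
  have hdisc : (p - l) ^ 2 ≤ l ^ 2 - l := by
    nlinarith [mul_nonneg (sub_nonneg.2 hlp) (by linarith : 0 ≤ 1 - 2 * (p * t))]
  refine ⟨⟨hlp, hdisc⟩, ?_⟩
  rw [div_eq_iff (by nlinarith)]
  exact hrel.symm

theorem div_lt_div_of_lowerBranch {l a b X Z : ℝ} (hl : 1 < l) (ha : 0 < a) (hab : a < b)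
    (hb : b ≤ 1 / 2) (hX : X ≤ 1 / 2) (hZ : Z ≤ 1 / 2) (hXa : X * (1 - X) = l * (a * (1 - a)))
    (hZb : Z * (1 - Z) = l * (b * (1 - b))) : X / a < Z / b := by
  obtain ⟨hXmem, hXinv⟩ := div_mem_lowerBranchRatios hl ha (by linarith) hX hXa
  obtain ⟨hZmem, hZinv⟩ := div_mem_lowerBranchRatios hl (ha.trans hab) hb hZ hZb
  exact ((strictMonoOn_sub_div_sq_sub hl).lt_iff_lt hXmem hZmem).1 (by simpa [hXinv, hZinv])

section Simplex

variable {ι : Type*} [Fintype ι]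

theorem lt_sum_of_one_lt_card (hι : 1 < Fintype.card ι) {z : ι → ℝ} (hz : ∀ i, 0 < z i)
    (i : ι) : z i < ∑ j, z j := by
  have : Nontrivial ι := Fintype.one_lt_card_iff_nontrivial.1 hι
  obtain ⟨j, hj⟩ := exists_ne i
  exact single_lt_sum hj (mem_univ i) (mem_univ j) (hz j) fun k _ _ => (hz k).le

theorem add_lt_sum_of_ne (hι : 3 ≤ Fintype.card ι) {z : ι → ℝ} (hz : ∀ i, 0 < z i) {i j : ι}
    (hij : i ≠ j) : z i + z j < ∑ k, z k := by
  classical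
  obtain ⟨k, -, hk⟩ := exists_mem_notMem_of_card_lt_card (s := {i, j}) (t := univ)
    (by rw [card_univ]; exact card_le_two.trans_lt hι)
  calc z i + z j = ∑ m ∈ {i, j}, z m := (sum_pair hij).symm
    _ < ∑ m, z m :=
      sum_lt_sum_of_subset (subset_univ _) (mem_univ k) hk (hz k) fun m _ _ => (hz m).le

theorem eq_of_mul_one_sub_eq_mul (hι : 3 ≤ Fintype.card ι) {x y : ι → ℝ} (hx : ∀ i, 0 < x i)
    (hxsum : ∑ i, x i = 1) (hy : ∀ i, 0 < y i) (hysum : ∑ i, y i = 1) {l : ℝ} (hl : 1 ≤ l)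
    (h : ∀ i, x i * (1 - x i) = l * (y i * (1 - y i))) : x = y := by
  classical
  have hx2 : ∀ {i j}, i ≠ j → x i + x j < 1 := fun hij => hxsum ▸ add_lt_sum_of_ne hι hx hij
  have hy2 : ∀ {i j}, i ≠ j → y i + y j < 1 := fun hij => hysum ▸ add_lt_sum_of_ne hι hy hij
  by_cases hsmall : ∀ i, y i ≤ 1 / 2
  · have hyx : ∀ i, y i ≤ x i := fun i =>
      le_of_mul_one_sub_le (hsmall i)
        (by rw [h i]; exact le_mul_of_one_le_left (by nlinarith [hy i, hsmall i]) hl)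
    funext i
    exact ((sum_eq_sum_iff_of_le fun i _ => hyx i).1 (hysum.trans hxsum.symm) i (mem_univ i)).symm
  obtain ⟨k, hk⟩ : ∃ k, 1 / 2 < y k := by simpa using hsmall
  have hyoff : ∀ {i}, i ≠ k → y i < 1 / 2 := fun hik => by linarith [hy2 hik]
  -- `k` maximizes `yᵢ (1 - yᵢ)`, hence `xᵢ (1 - xᵢ)`, hence `xᵢ`
  have hxoff : ∀ {i}, i ≠ k → x i < 1 / 2 := fun {i} hik => by
    have hgy : y i * (1 - y i) < y k * (1 - y k) :=
      (mul_one_sub_lt_mul_one_sub_iff (hy2 hik)).2 (by linarith [hyoff hik])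
    have hgx : x i * (1 - x i) < x k * (1 - x k) := by
      rw [h i, h k]; exact mul_lt_mul_of_pos_left hgy (by linarith)
    linarith [(mul_one_sub_lt_mul_one_sub_iff (hx2 hik)).1 hgx, hx2 hik]
  have hsplit : ∀ z : ι → ℝ, ∑ i, z i = 1 → ∑ i ∈ univ.erase k, z i = 1 - z k := fun z hz => by
    rw [← hz, ← add_sum_erase _ _ (mem_univ k)]; ring
  rcases hl.eq_or_lt with rfl | hl
  · have hoff : ∀ i ∈ univ.erase k, x i = y i := fun i hi =>
      eq_of_mul_one_sub_eq (hxoff (ne_of_mem_erase hi)).le (hyoff (ne_of_mem_erase hi)).le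
        (by rw [h i, one_mul])
    have hxk : x k = y k := by linarith [hsplit x hxsum, hsplit y hysum, sum_congr rfl hoff]
    funext i
    by_cases hik : i = k
    · rw [hik, hxk]
    · exact hoff i (mem_erase.2 ⟨hik, mem_univ i⟩)
  -- `Z = min (x k) (1 - x k)`, the lower-branch partner of `u = 1 - y k = ∑_{i ≠ k} yᵢ`
  obtain ⟨Z, hZ, hZv, hgZ⟩ : ∃ Z ≤ 1 / 2, Z ≤ 1 - x k ∧
      Z * (1 - Z) = l * ((1 - y k) * (1 - (1 - y k))) := by
    rcases le_total (x k) (1 / 2) with hxk | hxk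
    · exact ⟨x k, hxk, by linarith, by linear_combination h k⟩
    · exact ⟨1 - x k, by linarith, le_rfl, by linear_combination h k⟩
  have hratio : ∀ i ∈ univ.erase k, x i / y i < Z / (1 - y k) := fun i hi =>
    have hik := ne_of_mem_erase hi
    div_lt_div_of_lowerBranch hl (hy i) (by linarith [hy2 hik]) (by linarith) (hxoff hik).le hZ
      (h i) hgZ
  have hne : (univ.erase k).Nonempty := by
    rw [← card_pos, card_erase_of_mem (mem_univ k), card_univ]; omega
  have hu : 0 < 1 - y k := hsplit y hysum ▸ sum_pos (fun i _ => hy i) hne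
  have : ∑ i ∈ univ.erase k, x i < Z :=
    calc ∑ i ∈ univ.erase k, x i = ∑ i ∈ univ.erase k, x i / y i * y i :=
          sum_congr rfl fun i _ => (div_mul_cancel₀ _ (hy i).ne').symm
      _ < ∑ i ∈ univ.erase k, Z / (1 - y k) * y i :=
          sum_lt_sum_of_nonempty hne fun i hi => mul_lt_mul_of_pos_right (hratio i hi) (hy i)
      _ = Z := by rw [← mul_sum, hsplit y hysum, div_mul_cancel₀ _ hu.ne']
  linarith [hsplit x hxsum]

end Simplex

theorem mul_one_sub_eq_of_DFmap_eq_self {n : ℕ} {c z : Fin n → ℝ} (hfz : DFmap c z = z)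
    {i : Fin n} (hi : z i < 1) : z i * (1 - z i) = (∑ j, c j / (1 - z j))⁻¹ * c i := by
  nth_rewrite 1 [← congrFun hfz i]
  simp only [DFmap]
  field_simp [(sub_pos.2 hi).ne']

theorem DFmap_fixedPoint_unique_general (n : ℕ) (hn : 3 ≤ n) (c : Fin n → ℝ)
    (hc : ∀ i, 0 < c i)
    (x : Fin n → ℝ) (hx : ∀ i, 0 < x i) (hxsum : ∑ i, x i = 1)
    (y : Fin n → ℝ) (hy : ∀ i, 0 < y i) (hysum : ∑ i, y i = 1)
    (hfx : DFmap c x = x) (hfy : DFmap c y = y) :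
    x = y := by
  have hcard : 3 ≤ Fintype.card (Fin n) := by rwa [Fintype.card_fin]
  have hlt1 : ∀ z : Fin n → ℝ, (∀ i, 0 < z i) → ∑ i, z i = 1 → ∀ i, z i < 1 :=
    fun z hz hzsum i => hzsum ▸ lt_sum_of_one_lt_card (by omega) hz i
  wlog hle : ∑ j, c j / (1 - x j) ≤ ∑ j, c j / (1 - y j) generalizing x y
  · exact (this y hy hysum x hx hxsum hfy hfx (le_of_not_ge hle)).symm
  have hSx : 0 < ∑ j, c j / (1 - x j) :=
    sum_pos (fun j _ => div_pos (hc j) (sub_pos.2 (hlt1 x hx hxsum j)))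
      (univ_nonempty_iff.2 ⟨⟨0, by omega⟩⟩)
  refine eq_of_mul_one_sub_eq_mul hcard hx hxsum hy hysum ((one_le_div hSx).2 hle) fun i => ?_
  rw [mul_one_sub_eq_of_DFmap_eq_self hfx (hlt1 x hx hxsum i),
    mul_one_sub_eq_of_DFmap_eq_self hfy (hlt1 y hy hysum i)]
  field_simp [(hSx.trans_le hle).ne']

/-- For `n ≥ 3` and `c ∈ int(Δ^{n-1})`, the DeGroot–Friedkin map has at most
one fixed point in `int(Δ^{n-1})`. -/
theorem DFmap_fixedPoint_unique (n : ℕ) (hn : 3 ≤ n) (c : Fin n → ℝ)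
    (hc : ∀ i, 0 < c i) (hcsum : ∑ i, c i = 1)
    (x : Fin n → ℝ) (hx : ∀ i, 0 < x i) (hxsum : ∑ i, x i = 1)
    (y : Fin n → ℝ) (hy : ∀ i, 0 < y i) (hysum : ∑ i, y i = 1)
    (hfx : DFmap c x = x) (hfy : DFmap c y = y) :
    x = y :=
  DFmap_fixedPoint_unique_general n hn c hc x hx hxsum y hy hysum hfx hfy
end

section
/- Let n ≥ 3 and c ∈ int(Δ^{n-1}), and let x* ∈ int(Δ^{n-1}) be a fixed point of the DeGroot–Friedkin map f (i.e., f(x*) = x*). Then x* = (1/n, …, 1/n) if and only if c = (1/n, …, 1/n). -/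
open Finset

/-- For `n ≥ 3`, `c ∈ int(Δ^{n-1})`, and an interior fixed point `x*` of the
DeGroot–Friedkin map, `x* = 1/n` if and only if `c = 1/n`. -/
theorem DFmap_fixedPoint_uniform_iff (n : ℕ) (hn : 3 ≤ n) (c : Fin n → ℝ)
    (hc : ∀ i, 0 < c i) (hcsum : ∑ i, c i = 1)
    (xs : Fin n → ℝ) (hxs : ∀ i, 0 < xs i) (hxssum : ∑ i, xs i = 1)
    (hfix : DFmap c xs = xs) :
    xs = (fun _ => (1 : ℝ) / n) ↔ c = (fun _ => (1 : ℝ) / n) := by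
  have hn3 : (3:ℝ) ≤ (n:ℝ) := by exact_mod_cast hn
  have hn0 : (n:ℝ) ≠ 0 := by linarith
  have hnt : Nontrivial (Fin n) := Fin.nontrivial_iff_two_le.mpr (by omega)
  have hne : Nonempty (Fin n) := ⟨⟨0, by omega⟩⟩
  have hxlt : ∀ i, xs i < 1 := by
    intro i
    obtain ⟨j, hj⟩ := exists_ne i
    have hp : xs i + xs j ≤ 1 := by
      rw [← hxssum, ← Finset.sum_pair (Ne.symm hj)]
      exact Finset.sum_le_sum_of_subset_of_nonneg (Finset.subset_univ _)
        (fun k _ _ => (hxs k).le)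
    linarith [hxs j]
  have hSpos : 0 < ∑ j, c j / (1 - xs j) :=
    Finset.sum_pos (fun j _ => div_pos (hc j) (by linarith [hxlt j]))
      Finset.univ_nonempty
  constructor
  · intro hx
    funext i
    have hfi := congrFun hfix i
    rw [hx] at hfi
    simp only [DFmap] at hfi
    have hnd : (1:ℝ) - 1/n ≠ 0 := by
      have : (1:ℝ)/n ≤ 1/3 := by
        apply div_le_div_of_nonneg_left <;> linarith
      linarith
    rw [← Finset.sum_div, hcsum, one_div (1 - 1/(n:ℝ)), div_eq_mul_inv (c i / _), inv_inv,
      div_mul_cancel₀ _ hnd] at hfi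
    exact hfi
  · intro hcu
    subst hcu
    set S := ∑ j, ((fun _ => (1:ℝ)/n) j) / (1 - xs j) with hS
    have hkey : ∀ i, xs i * (1 - xs i) = 1 / (n * S) := by
      intro i
      have hfi := congrFun hfix i
      simp only [DFmap, ← hS] at hfi
      have h1 : (1:ℝ)/n / (1 - xs i) = xs i * S := by
        rw [div_eq_iff (ne_of_gt hSpos)] at hfi
        exact hfi
      have hxi : (1:ℝ) - xs i ≠ 0 := by linarith [hxlt i]
      field_simp at h1 ⊢
      nlinarith [hSpos]
    have halleq : ∀ i j, xs i = xs j := by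
      intro i j
      by_contra h
      have heq : xs i * (1 - xs i) = xs j * (1 - xs j) := by
        rw [hkey i, hkey j]
      have hfac : (xs i - xs j) * (1 - (xs i + xs j)) = 0 := by nlinarith
      have hsum1 : xs i + xs j = 1 := by
        rcases mul_eq_zero.mp hfac with h1 | h1
        · exact absurd (by linarith : xs i = xs j) h
        · linarith
      have hij : i ≠ j := fun e => h (by rw [e])
      have : ((Finset.univ : Finset (Fin n)) \ {i, j}).Nonempty := by
        rw [← Finset.card_pos, Finset.card_sdiff_of_subset (Finset.subset_univ _)]
        have h2 : ({i, j} : Finset (Fin n)).card ≤ 2 :=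
          (Finset.card_insert_le _ _).trans (by simp)
        have := Finset.card_univ (α := Fin n)
        simp only [Fintype.card_fin] at this
        omega
      obtain ⟨k, hk⟩ := this
      simp only [Finset.mem_sdiff, Finset.mem_univ, Finset.mem_insert,
        Finset.mem_singleton, true_and, not_or] at hk
      have hsum3 : xs i + xs j + xs k ≤ 1 := by
        rw [← hxssum]
        have hdec : ({i, j, k} : Finset (Fin n)).sum xs = xs i + (xs j + xs k) := by
          rw [Finset.sum_insert (by
            simp only [Finset.mem_insert, Finset.mem_singleton]
            push_neg
            exact ⟨hij, Ne.symm hk.1⟩), Finset.sum_pair (Ne.symm hk.2)]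
        calc xs i + xs j + xs k = ∑ l ∈ ({i, j, k} : Finset (Fin n)), xs l := by
              rw [hdec]; ring
          _ ≤ ∑ l, xs l := Finset.sum_le_sum_of_subset_of_nonneg
              (Finset.subset_univ _) (fun l _ _ => (hxs l).le)
      linarith [hxs k]
    have hx1 : ∑ j, xs j = n * xs ⟨0, by omega⟩ := by
      rw [Finset.sum_congr rfl (fun j _ => halleq j ⟨0, by omega⟩)]
      simp [Finset.card_univ, mul_comm]
    funext i
    rw [halleq i ⟨0, by omega⟩]
    rw [hxssum] at hx1
    field_simp
    linarith
end

section
/- For n ≥ 3, the uniform vector (1/n, …, 1/n) is the unique minimizer of the function x ↦ H(1−x) − H(x) over the standard simplex Δ^{n-1}: for every x ∈ Δ^{n-1} with x ≠ (1/n,…,1/n), H(1−(1/n,…,1/n)) − H((1/n,…,1/n)) < H(1−x) − H(x). -/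
/-!
Write `H(1-x) - H(x) = ∑ φ(xᵢ)` with `φ(t) = negMulLog (1 - t) - negMulLog t` and let
`a = 1/n`.

If every `xᵢ ≤ 1 - a`, use the tangent line of `φ` at `a`: since `φ'(t) = log (t(1-t)) + 2`
and `t(1-t) - a(1-a) = (t-a)(1-a-t)`, the function `φ(t) - φ'(a) t` has its strict minimum on
`[0, 1-a]` at `t = a`; summing over `i` (with `∑ xᵢ = n a` fixed) gives the claim.

Otherwise some `xⱼ = 1 - u` with `u < a`, and every other coordinate is at most `u`. Jensen for
`t log t` and the chord of the concave `negMulLog (1 - t)` on `[0, a]` bound the remaining terms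
from below, so that `∑ φ(xᵢ) ≥ C u - negMulLog (1 - u)` with
`C = n negMulLog (1 - a) - log (n - 1) ≤ 1 - log 2`. This bound is strictly decreasing on
`[0, 1/2]`, and already at `u = a` it dominates the uniform value `n φ(a)`; the latter comparison
is the numerical inequality `n^(n(n-2)) ≤ (n-1)^(n²-n-1)`.
-/

open Finset

/-- Entropy `H(p) = -∑ pᵢ log pᵢ` (with `0 log 0 = 0`). -/
noncomputable def entropy {n : ℕ} (p : Fin n → ℝ) : ℝ :=
  -∑ i, p i * Real.log (p i)

open Real

namespace ExtropySubEntropy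

noncomputable def summand (t : ℝ) : ℝ := negMulLog (1 - t) - negMulLog t

theorem _root_.extropy_sub_entropy_eq_sum_summand {n : ℕ} (x : Fin n → ℝ) :
    extropy x - entropy x = ∑ i, summand (x i) := by
  simp only [extropy, entropy, summand, negMulLog_eq_neg, sum_sub_distrib, sum_neg_distrib]

theorem continuous_summand : Continuous summand :=
  (continuous_negMulLog.comp (continuous_sub_left 1)).sub continuous_negMulLog

theorem hasDerivAt_summand {t : ℝ} (h0 : t ≠ 0) (h1 : t ≠ 1) :
    HasDerivAt summand (log t + log (1 - t) + 2) t := by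
  have h := ((hasDerivAt_negMulLog (sub_ne_zero.2 h1.symm)).comp t
    ((hasDerivAt_id t).const_sub 1)).sub (hasDerivAt_negMulLog h0)
  exact h.congr_deriv (by ring)

theorem summand_sub_mul_lt {a t : ℝ} (ha0 : 0 < a) (ha : a < 1 / 2) (ht0 : 0 ≤ t)
    (ht1 : t ≤ 1 - a) (hne : t ≠ a) :
    summand a - (log a + log (1 - a) + 2) * a < summand t - (log a + log (1 - a) + 2) * t := by
  set c := log a + log (1 - a) + 2
  set g : ℝ → ℝ := fun t => summand t - c * t
  have hcont : Continuous g := continuous_summand.sub (continuous_const_mul c)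
  have hderiv {x : ℝ} (hx0 : 0 < x) (hx1 : x < 1) :
      deriv g x = log (x * (1 - x)) - log (a * (1 - a)) := by
    have hg : HasDerivAt g (log x + log (1 - x) + 2 - c * 1) x :=
      (hasDerivAt_summand hx0.ne' hx1.ne).sub ((hasDerivAt_id x).const_mul c)
    rw [hg.deriv, log_mul hx0.ne' (by linarith), log_mul ha0.ne' (by linarith)]
    ring
  have hanti : StrictAntiOn g (Set.Icc 0 a) := by
    refine strictAntiOn_of_deriv_neg (convex_Icc 0 a) hcont.continuousOn fun x hx => ?_
    rw [interior_Icc] at hx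
    rw [hderiv hx.1 (by linarith [hx.2]), sub_neg]
    exact log_lt_log (mul_pos hx.1 (by linarith [hx.2])) (by nlinarith [hx.1, hx.2])
  have hmono : StrictMonoOn g (Set.Icc a (1 - a)) := by
    refine strictMonoOn_of_deriv_pos (convex_Icc a (1 - a)) hcont.continuousOn fun x hx => ?_
    rw [interior_Icc] at hx
    rw [hderiv (ha0.trans hx.1) (by linarith [hx.2]), sub_pos]
    exact log_lt_log (mul_pos ha0 (by linarith)) (by nlinarith [hx.1, hx.2])
  rcases hne.lt_or_gt with hlt | hgt
  · exact hanti ⟨ht0, hlt.le⟩ ⟨ha0.le, le_rfl⟩ hlt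
  · exact hmono ⟨le_rfl, by linarith⟩ ⟨hgt.le, ht1⟩ hgt

theorem card_mul_summand_lt_sum_summand {ι : Type*} [Fintype ι] {a : ℝ} (ha0 : 0 < a)
    (ha : a < 1 / 2) {x : ι → ℝ} (hx0 : ∀ i, 0 ≤ x i) (hx1 : ∀ i, x i ≤ 1 - a)
    (hsum : ∑ i, x i = Fintype.card ι * a) (hne : x ≠ fun _ => a) :
    Fintype.card ι * summand a < ∑ i, summand (x i) := by
  set c := log a + log (1 - a) + 2
  obtain ⟨j, hj⟩ := Function.ne_iff.1 hne
  have key : ∑ _i : ι, (summand a - c * a) < ∑ i, (summand (x i) - c * x i) := by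
    refine sum_lt_sum (fun i _ => ?_)
      ⟨j, mem_univ j, summand_sub_mul_lt ha0 ha (hx0 j) (hx1 j) hj⟩
    rcases eq_or_ne (x i) a with h | h
    · rw [h]
    · exact (summand_sub_mul_lt ha0 ha (hx0 i) (hx1 i) h).le
  simp only [sum_sub_distrib, ← mul_sum, hsum, sum_const, card_univ, nsmul_eq_mul] at key
  linarith

theorem sum_mul_log_div_card_le {ι : Type*} (s : Finset ι) {x : ι → ℝ}
    (hx : ∀ i ∈ s, 0 ≤ x i) :
    (∑ i ∈ s, x i) * log ((∑ i ∈ s, x i) / #s) ≤ ∑ i ∈ s, x i * log (x i) := by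
  rcases s.eq_empty_or_nonempty with rfl | hs
  · simp
  have hm : (0 : ℝ) < #s := by exact_mod_cast hs.card_pos
  have jensen := convexOn_mul_log.map_sum_le (t := s) (w := fun _ => (#s : ℝ)⁻¹) (p := x)
    (fun _ _ => by positivity) (by simp [hm.ne']) hx
  simp only [smul_eq_mul] at jensen
  rw [← mul_sum, ← mul_sum, inv_mul_eq_div, inv_mul_eq_div, le_div_iff₀ hm] at jensen
  refine Eq.trans_le ?_ jensen
  field_simp

theorem div_mul_negMulLog_one_sub_le {a t : ℝ} (ha0 : 0 < a) (ha1 : a ≤ 1) (ht0 : 0 ≤ t)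
    (hta : t ≤ a) : t / a * negMulLog (1 - a) ≤ negMulLog (1 - t) := by
  have hw : t / a ≤ 1 := (div_le_one ha0).2 hta
  have chord := concaveOn_negMulLog.2 (Set.mem_Ici.2 zero_le_one)
    (Set.mem_Ici.2 (sub_nonneg.2 ha1)) (sub_nonneg.2 hw) (div_nonneg ht0 ha0.le) (by ring)
  have hpt : (1 - t / a) • (1 : ℝ) + (t / a) • (1 - a) = 1 - t := by
    simp only [smul_eq_mul]
    field_simp
    ring
  rw [hpt] at chord
  simpa using chord

theorem sum_mul_log_div_card_add_le_sum_summand {ι : Type*} (s : Finset ι) {a : ℝ} (ha0 : 0 < a)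
    (ha1 : a ≤ 1) {x : ι → ℝ} (hx0 : ∀ i ∈ s, 0 ≤ x i) (hxa : ∀ i ∈ s, x i ≤ a) :
    (∑ i ∈ s, x i) * log ((∑ i ∈ s, x i) / #s) + (∑ i ∈ s, x i) / a * negMulLog (1 - a)
      ≤ ∑ i ∈ s, summand (x i) := by
  have hsplit : ∑ i ∈ s, summand (x i)
      = ∑ i ∈ s, x i * log (x i) + ∑ i ∈ s, negMulLog (1 - x i) := by
    rw [← sum_add_distrib]
    exact sum_congr rfl fun i _ => by simp only [summand, negMulLog]; ring
  refine hsplit ▸ add_le_add (sum_mul_log_div_card_le s hx0) ?_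
  rw [sum_div, sum_mul]
  exact sum_le_sum fun i hi => div_mul_negMulLog_one_sub_le ha0 ha1 (hx0 i hi) (hxa i hi)

theorem strictAntiOn_mul_sub_negMulLog_one_sub {C : ℝ} (hC : C ≤ 1 - log 2) :
    StrictAntiOn (fun u => C * u - negMulLog (1 - u)) (Set.Icc 0 (1 / 2)) := by
  have hcont : Continuous fun u => C * u - negMulLog (1 - u) :=
    (continuous_const_mul C).sub (continuous_negMulLog.comp (continuous_sub_left 1))
  refine strictAntiOn_of_deriv_neg (convex_Icc 0 (1 / 2)) hcont.continuousOn fun u hu => ?_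
  rw [interior_Icc] at hu
  have hderiv : HasDerivAt (fun u => C * u - negMulLog (1 - u))
      (C * 1 - (-log (1 - u) - 1) * -1) u :=
    ((hasDerivAt_id u).const_mul C).sub ((hasDerivAt_negMulLog (by linarith [hu.2])).comp u
      ((hasDerivAt_id u).const_sub 1))
  have hlog : -log 2 < log (1 - u) := by
    rw [← log_inv]
    exact log_lt_log (by norm_num) (by linarith [hu.2])
  rw [hderiv.deriv]
  linarith

theorem natCast_mul_sub_two_mul_log_le {n : ℕ} (hn : 3 ≤ n) :
    (n : ℝ) * (n - 2) * log n ≤ (n ^ 2 - n - 1) * log (n - 1) := by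
  rcases hn.eq_or_lt with rfl | hn4
  · have h := log_le_log (by norm_num) (show (3 : ℝ) ^ 3 ≤ 2 ^ 5 by norm_num)
    rw [log_pow, log_pow] at h
    norm_num at h ⊢
    linarith
  have hN : (4 : ℝ) ≤ n := by exact_mod_cast hn4
  set N : ℝ := (n : ℝ)
  have hN1 : 0 < N - 1 := by linarith
  have hdiff : log N - log (N - 1) ≤ 1 / (N - 1) := by
    rw [← log_div (by linarith) hN1.ne']
    convert log_le_sub_one_of_pos (div_pos (by linarith) hN1) using 1
    field_simp
    ring
  have hmono : log (N - 1) ≤ log N := log_le_log (by linarith) (by linarith)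
  have hlogN : 2 * log 2 ≤ log N := by
    rw [← log_rpow zero_lt_two]
    exact log_le_log (by positivity) (by norm_num; linarith)
  have hlog2 := log_two_gt_d9
  have h1 : N * ((N - 1) * (log N - log (N - 1))) ≤ N * 1 := by
    refine mul_le_mul_of_nonneg_left ?_ (by linarith)
    rwa [le_div_iff₀' (by linarith)] at hdiff
  nlinarith

theorem natCast_mul_summand_one_div_le {n : ℕ} (hn : 3 ≤ n) :
    n * summand (1 / n) ≤ -log (n - 1) / n := by
  have hN : (3 : ℝ) ≤ n := by exact_mod_cast hn
  have hval : n * summand (1 / n) = (n - 1) * (log n - log (n - 1)) - log n := by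
    rw [summand, show (1 : ℝ) - 1 / n = (n - 1) / n by field_simp, negMulLog, negMulLog,
      log_div (by linarith) (by linarith), one_div, log_inv]
    field_simp
    ring
  rw [hval, le_div_iff₀ (by linarith)]
  linear_combination natCast_mul_sub_two_mul_log_le hn

theorem mul_sub_negMulLog_le_sum_summand {ι : Type*} [Fintype ι] (hn : 2 ≤ Fintype.card ι)
    {x : ι → ℝ} (hx0 : ∀ i, 0 ≤ x i) (hsum : ∑ i, x i = 1) {j : ι}
    (hj : 1 - 1 / Fintype.card ι ≤ x j) :
    (Fintype.card ι * negMulLog (1 - 1 / Fintype.card ι) - log (Fintype.card ι - 1)) * (1 - x j)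
      - negMulLog (x j) ≤ ∑ i, summand (x i) := by
  classical
  set n := Fintype.card ι with hn_def
  have hN : (2 : ℝ) ≤ n := by exact_mod_cast hn
  set u := 1 - x j
  have hu : ∑ i ∈ univ.erase j, x i = u := by
    rw [eq_sub_iff_add_eq, add_comm, add_sum_erase _ _ (mem_univ j), hsum]
  have hxn : ∀ i ∈ univ.erase j, x i ≤ 1 / n := fun i hi =>
    ((single_le_sum (fun k _ => hx0 k) hi).trans hu.le).trans (by linarith)
  have hrest := sum_mul_log_div_card_add_le_sum_summand (univ.erase j)
    (by positivity : (0 : ℝ) < 1 / n) (by rw [div_le_one] <;> linarith) (fun i _ => hx0 i) hxn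
  rw [hu, card_erase_of_mem (mem_univ j), card_univ, Nat.cast_sub (by omega), Nat.cast_one,
    div_div_eq_mul_div, div_one, ← hn_def] at hrest
  have hlog : u * log (u / (n - 1)) = u * log u - u * log (n - 1) := by
    rcases (hu ▸ sum_nonneg fun i _ => hx0 i : 0 ≤ u).eq_or_lt with h | h
    · simp [← h]
    · rw [log_div h.ne' (by linarith)]
      ring
  rw [← add_sum_erase _ _ (mem_univ j), summand, show 1 - x j = u from rfl]
  simp only [negMulLog] at hrest ⊢
  linear_combination hrest - hlog

theorem card_mul_summand_one_div_lt_sum_summand_of_lt {ι : Type*} [Fintype ι]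
    (hn : 3 ≤ Fintype.card ι) {x : ι → ℝ} (hx0 : ∀ i, 0 ≤ x i) (hsum : ∑ i, x i = 1)
    {j : ι} (hj : 1 - 1 / Fintype.card ι < x j) :
    Fintype.card ι * summand (1 / Fintype.card ι) < ∑ i, summand (x i) := by
  have hlower := mul_sub_negMulLog_le_sum_summand (by omega) hx0 hsum hj.le
  set n := Fintype.card ι
  have hN : (3 : ℝ) ≤ n := by exact_mod_cast hn
  set C := n * negMulLog (1 - 1 / n) - log (n - 1)
  have hC : C ≤ 1 - log 2 := by
    have h1 := negMulLog_le_one_sub_self (show 0 ≤ 1 - 1 / (n : ℝ) by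
      rw [sub_nonneg, div_le_one] <;> linarith)
    rw [sub_sub_cancel] at h1
    have h2 : log 2 ≤ log (n - 1) := log_le_log (by norm_num) (by linarith)
    have h3 := mul_le_mul_of_nonneg_left h1 (by linarith : (0 : ℝ) ≤ n)
    rw [mul_one_div_cancel (by linarith)] at h3
    linarith
  have hx1 : x j ≤ 1 := hsum ▸ single_le_sum (fun i _ => hx0 i) (mem_univ j)
  have hn2 : 1 / (n : ℝ) ≤ 1 / 2 := by rw [div_le_div_iff₀] <;> linarith
  have hdecr := strictAntiOn_mul_sub_negMulLog_one_sub hC ⟨by linarith, by linarith⟩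
    ⟨by positivity, hn2⟩ (by linarith : 1 - x j < 1 / n)
  have hend : C * (1 / n) - negMulLog (1 - 1 / n) = -log (n - 1) / n := by
    simp only [C]
    field_simp
    ring
  have := natCast_mul_summand_one_div_le hn
  simp only [sub_sub_cancel] at hdecr
  linarith

end ExtropySubEntropy

open ExtropySubEntropy

/-- For `n ≥ 3`, the uniform vector `1/n` is the unique minimizer of
`x ↦ H(1−x) − H(x)` over the standard simplex. -/
theorem uniform_unique_minimizer_extropy_sub_entropy (n : ℕ) (hn : 3 ≤ n) :
    ∀ x : Fin n → ℝ, (∀ i, 0 ≤ x i) → (∑ i, x i = 1) →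
      x ≠ (fun _ => (1 : ℝ) / n) →
      extropy (fun _ : Fin n => (1 : ℝ) / n) - entropy (fun _ : Fin n => (1 : ℝ) / n)
        < extropy x - entropy x := by
  intro x hx0 hsum hne
  have hN : (3 : ℝ) ≤ n := by exact_mod_cast hn
  rw [extropy_sub_entropy_eq_sum_summand, extropy_sub_entropy_eq_sum_summand, sum_const,
    card_univ, Fintype.card_fin, nsmul_eq_mul]
  by_cases hsmall : ∀ i, x i ≤ 1 - 1 / n
  · have h := card_mul_summand_lt_sum_summand (ι := Fin n) (a := 1 / n) (by positivity)
      (by rw [div_lt_div_iff₀] <;> linarith) hx0 hsmall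
      (by rw [hsum, Fintype.card_fin]; field_simp) hne
    rwa [Fintype.card_fin] at h
  · push Not at hsmall
    obtain ⟨j, hj⟩ := hsmall
    have h := card_mul_summand_one_div_lt_sum_summand_of_lt (ι := Fin n)
      (by rwa [Fintype.card_fin]) hx0 hsum (j := j) (by rwa [Fintype.card_fin])
    rwa [Fintype.card_fin] at h
end

section
/- Let n ≥ 3, c ∈ int(Δ^{n-1}), and x ∈ int(Δ^{n-1}). Then the image f(x) of x under the DeGroot–Friedkin map is the unique minimizer over ξ ∈ Δ^{n-1} of the proximal objective ξ ↦ D_KL(ξ‖x) + Σᵢ ξᵢ log( xᵢ(1−xᵢ)/cᵢ ) (with the convention 0 log 0 := 0 in D_KL). -/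
open Finset

/-- Gibbs' inequality, strict version. -/
lemma gibbs_strict {n : ℕ} (q ξ : Fin n → ℝ) (hq : ∀ i, 0 < q i)
    (hqsum : ∑ i, q i = 1) (hξ : ∀ i, 0 ≤ ξ i) (hξsum : ∑ i, ξ i = 1)
    (hne : ξ ≠ q) : 0 < ∑ i, ξ i * Real.log (ξ i / q i) := by
  have key : ∑ i, ξ i * Real.log (q i / ξ i) < ∑ i, (q i - ξ i) := by
    obtain ⟨i0, hi0⟩ : ∃ i, ξ i ≠ q i := by
      by_contra h
      push_neg at h
      exact hne (funext h)
    apply Finset.sum_lt_sum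
    · intro i _
      rcases eq_or_lt_of_le (hξ i) with h0 | h0
      · simp [← h0]
        exact (hq i).le
      · have hr : 0 < q i / ξ i := div_pos (hq i) h0
        have := Real.log_le_sub_one_of_pos hr
        calc ξ i * Real.log (q i / ξ i) ≤ ξ i * (q i / ξ i - 1) := by
              exact mul_le_mul_of_nonneg_left this h0.le
          _ = q i - ξ i := by field_simp
    · refine ⟨i0, Finset.mem_univ _, ?_⟩
      rcases eq_or_lt_of_le (hξ i0) with h0 | h0
      · simp [← h0]
        exact hq i0
      · have hr : 0 < q i0 / ξ i0 := div_pos (hq i0) h0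
        have hr1 : q i0 / ξ i0 ≠ 1 := fun h => hi0 (by
          field_simp at h
          exact h.symm)
        have := Real.log_lt_sub_one_of_pos hr hr1
        calc ξ i0 * Real.log (q i0 / ξ i0) < ξ i0 * (q i0 / ξ i0 - 1) := by
              exact (mul_lt_mul_iff_right₀ h0).mpr this
          _ = q i0 - ξ i0 := by field_simp
  rw [Finset.sum_sub_distrib, hqsum, hξsum, sub_self] at key
  have : ∑ i, ξ i * Real.log (ξ i / q i) = -∑ i, ξ i * Real.log (q i / ξ i) := by
    rw [← Finset.sum_neg_distrib]
    apply Finset.sum_congr rfl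
    intro i _
    rcases eq_or_lt_of_le (hξ i) with h0 | h0
    · simp [← h0]
    · rw [show ξ i / q i = (q i / ξ i)⁻¹ by rw [inv_div], Real.log_inv, mul_neg]
  rw [this]
  linarith

/-- For `n ≥ 3`, `c, x ∈ int(Δ^{n-1})`, the image `f(x)` under the
DeGroot–Friedkin map is the unique minimizer over the simplex of the proximal
objective `ξ ↦ D_KL(ξ‖x) + ∑ᵢ ξᵢ log(xᵢ(1−xᵢ)/cᵢ)`. -/
theorem DFmap_proximal_recursion (n : ℕ) (hn : 3 ≤ n) (c : Fin n → ℝ)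
    (hc : ∀ i, 0 < c i) (hcsum : ∑ i, c i = 1)
    (x : Fin n → ℝ) (hx : ∀ i, 0 < x i) (hxsum : ∑ i, x i = 1) :
    (∀ i, 0 ≤ DFmap c x i) ∧ (∑ i, DFmap c x i) = 1 ∧
    ∀ ξ : Fin n → ℝ, (∀ i, 0 ≤ ξ i) → (∑ i, ξ i = 1) → ξ ≠ DFmap c x →
      klDiv (DFmap c x) x
          + (∑ i, DFmap c x i * Real.log (x i * (1 - x i) / c i))
        < klDiv ξ x + (∑ i, ξ i * Real.log (x i * (1 - x i) / c i)) := by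
  -- each coordinate is < 1
  have hx1 : ∀ i, x i < 1 := by
    intro i
    obtain ⟨j, hji⟩ : ∃ j : Fin n, j ≠ i := by
      have : Nontrivial (Fin n) := Fin.nontrivial_iff_two_le.mpr (by omega)
      exact exists_ne i
    calc x i < ∑ k, x k :=
          Finset.single_lt_sum hji (Finset.mem_univ i) (Finset.mem_univ j)
            (hx j) (fun k _ _ => (hx k).le)
      _ = 1 := hxsum
  have h1x : ∀ i, 0 < 1 - x i := fun i => by linarith [hx1 i]
  set S : ℝ := ∑ j, c j / (1 - x j) with hS
  haveI : Nonempty (Fin n) := ⟨⟨0, by omega⟩⟩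
  have hSpos : 0 < S :=
    Finset.sum_pos (fun j _ => div_pos (hc j) (h1x j)) Finset.univ_nonempty
  set q : Fin n → ℝ := DFmap c x with hqdef
  have hq : ∀ i, 0 < q i := fun i =>
    div_pos (div_pos (hc i) (h1x i)) hSpos
  have hqsum : ∑ i, q i = 1 := by
    rw [hqdef]
    unfold DFmap
    rw [← Finset.sum_div, div_self hSpos.ne']
  refine ⟨fun i => (hq i).le, hqsum, ?_⟩
  intro ξ hξ hξsum hne
  -- rewrite objective: F(ξ) = KL(ξ‖q) - log S
  have key : ∀ ζ : Fin n → ℝ, (∀ i, 0 ≤ ζ i) → (∑ i, ζ i = 1) →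
      klDiv ζ x + (∑ i, ζ i * Real.log (x i * (1 - x i) / c i))
        = (∑ i, ζ i * Real.log (ζ i / q i)) - Real.log S := by
    intro ζ hζ hζsum
    unfold klDiv
    rw [← Finset.sum_add_distrib]
    have : ∀ i ∈ Finset.univ, ζ i * Real.log (ζ i / x i)
        + ζ i * Real.log (x i * (1 - x i) / c i)
        = ζ i * Real.log (ζ i / q i) - ζ i * Real.log S := by
      intro i _
      rcases eq_or_lt_of_le (hζ i) with h0 | h0
      · simp [← h0]
      · have hqi : q i = c i / ((1 - x i) * S) := by
          rw [hqdef]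
          unfold DFmap
          rw [div_div]
        have e1 : ζ i / q i = ζ i * (1 - x i) * S / c i := by
          rw [hqi]
          field_simp
        rw [← mul_add, ← Real.log_mul (div_pos h0 (hx i)).ne'
            (div_pos (mul_pos (hx i) (h1x i)) (hc i)).ne', e1]
        have hx0 : x i ≠ 0 := (hx i).ne'
        have hc0 : c i ≠ 0 := (hc i).ne'
        rw [show ζ i / x i * (x i * (1 - x i) / c i) = ζ i * (1 - x i) / c i by
          field_simp]
        rw [show ζ i * (1 - x i) * S / c i = (ζ i * (1 - x i) / c i) * S by ring,
          Real.log_mul (div_pos (mul_pos h0 (h1x i)) (hc i)).ne' hSpos.ne']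
        ring
    rw [Finset.sum_congr rfl this, Finset.sum_sub_distrib, ← Finset.sum_mul, hζsum,
      one_mul]
  rw [key q (fun i => (hq i).le) hqsum, key ξ hξ hξsum]
  have hqkl : ∑ i, q i * Real.log (q i / q i) = 0 := by
    apply Finset.sum_eq_zero
    intro i _
    rw [div_self (hq i).ne', Real.log_one, mul_zero]
  rw [hqkl]
  have := gibbs_strict q ξ hq hqsum hξ hξsum hne
  linarith
end

section
/- Let C be an n×n real matrix with nonnegative entries, zero diagonal (C_{ii} = 0 for all i), and each row summing to 1 (Σⱼ C_{ij} = 1 for all i). Let c ∈ ℝⁿ with cᵢ ≥ 0 for all i, Σᵢ cᵢ = 1, and cᵀC = cᵀ (i.e., Σⱼ cⱼ C_{ji} = cᵢ for all i). Then cᵢ ≤ 1/2 for every i. -/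
open Finset

/-- If `C` is a row-stochastic nonnegative matrix with zero diagonal, and `c`
is a nonnegative left eigenvector of `C` for eigenvalue 1 normalized to sum
to 1, then every entry of `c` is at most `1/2`. -/
theorem left_eigenvector_entries_le_half (n : ℕ) (C : Matrix (Fin n) (Fin n) ℝ)
    (hnonneg : ∀ i j, 0 ≤ C i j)
    (hdiag : ∀ i, C i i = 0)
    (hrow : ∀ i, ∑ j, C i j = 1)
    (c : Fin n → ℝ) (hc : ∀ i, 0 ≤ c i) (hcsum : ∑ i, c i = 1)
    (heig : ∀ i, ∑ j, c j * C j i = c i) :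
    ∀ i, c i ≤ 1 / 2 := by
  intro i
  have hCle : ∀ j k, C j k ≤ 1 := by
    intro j k
    calc C j k ≤ ∑ m, C j m :=
      Finset.single_le_sum (fun m _ => hnonneg j m) (mem_univ k)
    _ = 1 := hrow j
  have h1 : c i = ∑ j ∈ univ.erase i, c j * C j i := by
    rw [← heig i, ← Finset.sum_erase]
    simp [hdiag i]
  have h2 : ∑ j ∈ univ.erase i, c j * C j i ≤ ∑ j ∈ univ.erase i, c j := by
    apply Finset.sum_le_sum
    intro j _
    calc c j * C j i ≤ c j * 1 := by
          exact mul_le_mul_of_nonneg_left (hCle j i) (hc j)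
    _ = c j := mul_one _
  have h3 : ∑ j ∈ univ.erase i, c j = 1 - c i := by
    rw [← hcsum, Finset.sum_erase_eq_sub (mem_univ i)]
  linarith
end

section
/- For y ∈ ℝ, let ρ(y) := −1/2 + √(1/4 + e^{y−2}), which is positive. Then the infimum over u ∈ ℝ of the function u ↦ e^{u−1} + u + e^{y−u−1} equals ρ(y) + 1 + log ρ(y) + e^{y−2}/ρ(y), and this infimum is attained at u = 1 + log ρ(y). -/
/-- One-dimensional minimization arising in the Lagrange dual problem:
for `ρ(y) = -1/2 + √(1/4 + e^{y-2})` (which is positive), the function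
`u ↦ e^{u-1} + u + e^{y-u-1}` attains its infimum over `u ∈ ℝ` at
`u = 1 + log ρ(y)`, and the infimum equals
`ρ(y) + 1 + log ρ(y) + e^{y-2}/ρ(y)`. -/
theorem infimum_dual_one_dim (y : ℝ) :
    let ρ : ℝ := -(1 / 2) + Real.sqrt (1 / 4 + Real.exp (y - 2))
    0 < ρ ∧
    (∀ u : ℝ, ρ + 1 + Real.log ρ + Real.exp (y - 2) / ρ
        ≤ Real.exp (u - 1) + u + Real.exp (y - u - 1)) ∧
    Real.exp ((1 + Real.log ρ) - 1) + (1 + Real.log ρ)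
        + Real.exp (y - (1 + Real.log ρ) - 1)
      = ρ + 1 + Real.log ρ + Real.exp (y - 2) / ρ := by
  intro ρ
  have hE : 0 < Real.exp (y - 2) := Real.exp_pos _
  have hs : Real.sqrt (1 / 4 + Real.exp (y - 2)) ^ 2 = 1 / 4 + Real.exp (y - 2) :=
    Real.sq_sqrt (by positivity)
  have hs2 : (1 : ℝ) / 2 < Real.sqrt (1 / 4 + Real.exp (y - 2)) := by
    nlinarith [Real.sqrt_nonneg (1 / 4 + Real.exp (y - 2))]
  have hρ : 0 < ρ := by simp only [ρ]; linarith
  -- key identity: ρ² + ρ = e^{y-2}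
  have key : ρ ^ 2 + ρ = Real.exp (y - 2) := by
    simp only [ρ]; nlinarith
  have hlog : Real.exp (Real.log ρ) = ρ := Real.exp_log hρ
  refine ⟨hρ, ?_, ?_⟩
  · intro u
    set t := u - (1 + Real.log ρ) with ht
    have h1 : Real.exp (u - 1) = ρ * Real.exp t := by
      rw [show u - 1 = Real.log ρ + t by ring, Real.exp_add, hlog]
    have h2 : Real.exp (y - u - 1) = Real.exp (y - 2) / ρ * Real.exp (-t) := by
      rw [show y - u - 1 = (y - 2) + (-t) - Real.log ρ by ring, Real.exp_sub,
        Real.exp_add, hlog]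
      ring
    have e1 := Real.add_one_le_exp t
    have e2 := Real.add_one_le_exp (-t)
    have hr : Real.exp (y - 2) / ρ = ρ + 1 := by
      field_simp; nlinarith
    rw [h1, h2, hr]
    have hu : u = t + 1 + Real.log ρ := by rw [ht]; ring
    rw [hu]
    nlinarith [Real.exp_pos t, Real.exp_pos (-t), mul_pos hρ (Real.exp_pos t)]
  · rw [show (1 + Real.log ρ) - 1 = Real.log ρ by ring, hlog,
      show y - (1 + Real.log ρ) - 1 = (y - 2) - Real.log ρ by ring,
      Real.exp_sub, hlog]
    ring
end

section
/- For n ≥ 2 and every x ∈ Δ^{n-1}, the extropy satisfies H(1−x) ≤ (n−1) log(n/(n−1)), with equality if and only if x = (1/n, …, 1/n). -/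
/-!
The extropy is `∑ φ (1 - xᵢ)` for the strictly concave `φ = negMulLog`, and the arguments
`1 - xᵢ ≥ 0` sum to `n - 1`. Jensen's inequality with uniform weights bounds it by
`n φ ((n - 1) / n) = (n - 1) log (n / (n - 1))`, with equality iff all `1 - xᵢ` are equal.
-/

open Finset

open Real

section UniformJensen

variable {ι E : Type*} [Fintype ι] [AddCommGroup E] [Module ℝ E] {s : Set E} {f : E → ℝ}
  {p : ι → E}

lemma sum_inv_card_eq_one [Nonempty ι] : ∑ _i : ι, (Fintype.card ι : ℝ)⁻¹ = 1 := by
  rw [sum_const, card_univ, nsmul_eq_mul, mul_inv_cancel₀ (by positivity)]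

lemma ConcaveOn.sum_le_card_mul_map_average (hf : ConcaveOn ℝ s f) (hp : ∀ i, p i ∈ s) :
    ∑ i, f (p i) ≤ Fintype.card ι * f ((Fintype.card ι : ℝ)⁻¹ • ∑ i, p i) := by
  cases isEmpty_or_nonempty ι
  · simp
  have hjensen := hf.le_map_sum (t := univ) (w := fun _ => (Fintype.card ι : ℝ)⁻¹)
    (fun _ _ => by positivity) sum_inv_card_eq_one (fun i _ => hp i)
  rwa [← smul_sum, ← smul_sum, smul_eq_mul, inv_mul_le_iff₀ (by positivity)] at hjensen

lemma StrictConcaveOn.sum_eq_card_mul_map_average_iff (hf : StrictConcaveOn ℝ s f)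
    (hp : ∀ i, p i ∈ s) :
    ∑ i, f (p i) = Fintype.card ι * f ((Fintype.card ι : ℝ)⁻¹ • ∑ i, p i) ↔
      ∀ j, p j = (Fintype.card ι : ℝ)⁻¹ • ∑ i, p i := by
  cases isEmpty_or_nonempty ι
  · simp
  have hjensen := hf.map_sum_eq_iff (t := univ) (w := fun _ => (Fintype.card ι : ℝ)⁻¹)
    (fun _ _ => by positivity) sum_inv_card_eq_one (fun i _ => hp i)
  rw [← smul_sum, ← smul_sum, smul_eq_mul, eq_comm,
    inv_mul_eq_iff_eq_mul₀ (by positivity)] at hjensen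
  simpa only [mem_univ, forall_const] using hjensen

end UniformJensen

lemma Real.mul_negMulLog_div (a b : ℝ) : a * negMulLog (b / a) = b * log (a / b) := by
  rcases eq_or_ne a 0 with rfl | ha
  · simp
  rw [negMulLog, ← inv_div, log_inv]
  field_simp

lemma extropy_eq_sum_negMulLog {n : ℕ} (x : Fin n → ℝ) :
    extropy x = ∑ i, negMulLog (1 - x i) := by
  simp only [extropy, negMulLog, neg_mul, sum_neg_distrib]

theorem extropy_le_max_general (n : ℕ) (x : Fin n → ℝ)
    (hx : ∀ i, 0 ≤ x i) (hxsum : ∑ i, x i = 1) :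
    extropy x ≤ ((n : ℝ) - 1) * Real.log ((n : ℝ) / ((n : ℝ) - 1)) ∧
    (extropy x = ((n : ℝ) - 1) * Real.log ((n : ℝ) / ((n : ℝ) - 1)) ↔
      x = (fun _ => (1 : ℝ) / n)) := by
  have hmem : ∀ i, 1 - x i ∈ Set.Ici 0 := fun i =>
    sub_nonneg.2 (hxsum ▸ single_le_sum (fun j _ => hx j) (mem_univ i))
  have hsum : ∑ i, (1 - x i) = n - 1 := by simp [sum_sub_distrib, hxsum]
  have hmax :
      (n : ℝ) * negMulLog ((n : ℝ)⁻¹ • ∑ i, (1 - x i)) = (n - 1) * log (n / (n - 1)) := by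
    rw [hsum, smul_eq_mul, inv_mul_eq_div, mul_negMulLog_div]
  have hbound := concaveOn_negMulLog.sum_le_card_mul_map_average hmem
  have hiff := strictConcaveOn_negMulLog.sum_eq_card_mul_map_average_iff hmem
  simp only [Fintype.card_fin] at hbound hiff
  rw [extropy_eq_sum_negMulLog, ← hmax]
  refine ⟨hbound, hiff.trans (funext_iff.trans (forall_congr' fun j => ?_)).symm⟩
  have hn : (n : ℝ) ≠ 0 := Nat.cast_ne_zero.2 j.pos.ne'
  rw [hsum, smul_eq_mul]
  constructor <;> intro h <;> field_simp at h ⊢ <;> linarith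

/-- For `n ≥ 2` and `x ∈ Δ^{n-1}`, the extropy satisfies
`H(1−x) ≤ (n−1) log(n/(n−1))`, with equality iff `x` is uniform. -/
theorem extropy_le_max (n : ℕ) (hn : 2 ≤ n) (x : Fin n → ℝ)
    (hx : ∀ i, 0 ≤ x i) (hxsum : ∑ i, x i = 1) :
    extropy x ≤ ((n : ℝ) - 1) * Real.log ((n : ℝ) / ((n : ℝ) - 1)) ∧
    (extropy x = ((n : ℝ) - 1) * Real.log ((n : ℝ) / ((n : ℝ) - 1)) ↔
      x = (fun _ => (1 : ℝ) / n)) :=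
  extropy_le_max_general n x hx hxsum
end
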